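/- arXiv:2010.05829 — 3 statements merged into one kernel-verified Lean document; each statement's English description precedes it below -/
import Mathlib

section
/- For any complex number z, the maximum of |z₁|² + |2·z·z₁ + z₂|² over all complex z₁, z₂ with |z₁|² + |z₂|² = 1 equals (|z| + √(1 + |z|²))². -/
/-! With `r = ‖z‖` and `M = √(1 + r²)`, the triangle inequality bounds the quantity by
`a² + (2ra + b)²` with `a = ‖z₁‖`, `b = ‖z₂‖`, and this quadratic form satisfies
`(r + M)² (a² + b²) - a² - (2ra + b)² = 2r(M - r)(a - (M + r)b)²`, because `(r + M)²` is the
largest eigenvalue of its matrix. Equality holds for `a = (M + r)b` once `z₂` points in the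
direction of `z`. -/

section QuadraticForm

variable (r : ℝ)

theorem sq_add_sq_two_mul_add_add_eq (a b : ℝ) :
    a ^ 2 + (2 * r * a + b) ^ 2 + 2 * r * (√(1 + r ^ 2) - r) * (a - (√(1 + r ^ 2) + r) * b) ^ 2 =
      (r + √(1 + r ^ 2)) ^ 2 * (a ^ 2 + b ^ 2) := by
  have hM : √(1 + r ^ 2) ^ 2 = 1 + r ^ 2 := Real.sq_sqrt (by positivity)
  linear_combination (-a ^ 2 - 4 * r * a * b + (2 * r * (√(1 + r ^ 2) + r) - 1) * b ^ 2) * hM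

theorem sq_add_sq_two_mul_add_le {r : ℝ} (hr : 0 ≤ r) (a b : ℝ) :
    a ^ 2 + (2 * r * a + b) ^ 2 ≤ (r + √(1 + r ^ 2)) ^ 2 * (a ^ 2 + b ^ 2) := by
  have hrM : r ≤ √(1 + r ^ 2) := Real.le_sqrt_of_sq_le (by linarith)
  rw [← sq_add_sq_two_mul_add_add_eq r a b]
  have : 0 ≤ 2 * r * (√(1 + r ^ 2) - r) := mul_nonneg (by positivity) (sub_nonneg.mpr hrM)
  nlinarith [sq_nonneg (a - (√(1 + r ^ 2) + r) * b)]

end QuadraticForm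

theorem norm_two_mul_mul_add_le (z z₁ z₂ : ℂ) : ‖2 * z * z₁ + z₂‖ ≤ 2 * ‖z‖ * ‖z₁‖ + ‖z₂‖ := by
  simpa using norm_add_le (2 * z * z₁) z₂

theorem exists_norm_two_mul_mul_add_eq (z : ℂ) {a b : ℝ} (ha : 0 ≤ a) (hb : 0 ≤ b) :
    ∃ z₁ z₂ : ℂ, ‖z₁‖ = a ∧ ‖z₂‖ = b ∧ ‖2 * z * z₁ + z₂‖ = 2 * ‖z‖ * a + b := by
  set u := Complex.exp (z.arg * Complex.I)
  have hu : ‖u‖ = 1 := Complex.norm_exp_ofReal_mul_I _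
  have hz : z = ‖z‖ * u := (Complex.norm_mul_exp_arg_mul_I z).symm
  refine ⟨a, b * u, by simp [ha], by simp [hu, hb], ?_⟩
  have : 2 * z * a + b * u = ((2 * ‖z‖ * a + b : ℝ) : ℂ) * u := by
    push_cast; linear_combination 2 * (a : ℂ) * hz
  rw [this, norm_mul, hu, mul_one, Complex.norm_real, Real.norm_of_nonneg (by positivity)]

theorem norm_sq_add_norm_two_mul_mul_add_sq_le (z z₁ z₂ : ℂ) :
    ‖z₁‖ ^ 2 + ‖2 * z * z₁ + z₂‖ ^ 2 ≤
      (‖z‖ + √(1 + ‖z‖ ^ 2)) ^ 2 * (‖z₁‖ ^ 2 + ‖z₂‖ ^ 2) := by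
  have := pow_le_pow_left₀ (norm_nonneg _) (norm_two_mul_mul_add_le z z₁ z₂) 2
  linarith [sq_add_sq_two_mul_add_le (norm_nonneg z) ‖z₁‖ ‖z₂‖]

theorem exists_norm_sq_add_norm_sq_eq_one_and_eq (z : ℂ) :
    ∃ z₁ z₂ : ℂ, ‖z₁‖ ^ 2 + ‖z₂‖ ^ 2 = 1 ∧
      ‖z₁‖ ^ 2 + ‖2 * z * z₁ + z₂‖ ^ 2 = (‖z‖ + √(1 + ‖z‖ ^ 2)) ^ 2 := by
  set r := ‖z‖
  set c := √(1 + r ^ 2) + r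
  have hc : 0 ≤ c := by positivity
  set t := (√(c ^ 2 + 1))⁻¹
  have ht : t ^ 2 * (c ^ 2 + 1) = 1 := by
    rw [inv_pow, Real.sq_sqrt (by positivity), inv_mul_cancel₀ (by positivity)]
  obtain ⟨z₁, z₂, h₁, h₂, h⟩ :=
    exists_norm_two_mul_mul_add_eq z (mul_nonneg hc (by positivity) : 0 ≤ c * t)
      (by positivity : 0 ≤ t)
  have hunit : (c * t) ^ 2 + t ^ 2 = 1 := by linear_combination ht
  refine ⟨z₁, z₂, by rw [h₁, h₂, hunit], ?_⟩
  have hcol : c * t - (√(1 + r ^ 2) + r) * t = 0 := sub_self _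
  rw [h₁, h]
  calc (c * t) ^ 2 + (2 * r * (c * t) + t) ^ 2
      = (c * t) ^ 2 + (2 * r * (c * t) + t) ^ 2 +
          2 * r * (√(1 + r ^ 2) - r) * (c * t - (√(1 + r ^ 2) + r) * t) ^ 2 := by
        rw [hcol]; ring
    _ = (r + √(1 + r ^ 2)) ^ 2 * ((c * t) ^ 2 + t ^ 2) := sq_add_sq_two_mul_add_add_eq r _ _
    _ = (r + √(1 + r ^ 2)) ^ 2 := by rw [hunit, mul_one]

theorem stmt_1 (z : ℂ) :
    IsGreatest {x : ℝ | ∃ z₁ z₂ : ℂ, ‖z₁‖ ^ 2 + ‖z₂‖ ^ 2 = 1 ∧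
      x = ‖z₁‖ ^ 2 + ‖2 * z * z₁ + z₂‖ ^ 2}
      ((‖z‖ + Real.sqrt (1 + ‖z‖ ^ 2)) ^ 2) := by
  refine ⟨?_, ?_⟩
  · obtain ⟨z₁, z₂, hunit, heq⟩ := exists_norm_sq_add_norm_sq_eq_one_and_eq z
    exact ⟨z₁, z₂, hunit, heq.symm⟩
  · rintro x ⟨z₁, z₂, hunit, rfl⟩
    simpa [hunit] using norm_sq_add_norm_two_mul_mul_add_sq_le z z₁ z₂
end

section
/- Let λ > 0 and α > 0. The maximum of λ·(|z₁|² + |√λ·α·z₁ + z₂|²) over complex z₁, z₂ with |z₁|² + |z₂|² = 1 equals λ·(√λ·α/2 + √(1 + λα²/4))², which equals (2/α)²·g(r)² with r = (2/α)²/λ and g(r) = (1 + √(1+r))/r. -/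
/-!
With `s = √(1 + β²/4)` and `μ = (β/2 + s)²`, the form `a² + (βa + b)²` satisfies
`μ (a² + b²) - a² - (βa + b)² = β (s - β/2) (a - (s + β/2) b)²`: the gap is a perfect square
because `(s - β/2)(s + β/2) = 1`. So `μ` bounds the form on the unit circle, with equality on the
line `a = (s + β/2) b`. For complex `z₁, z₂` the triangle inequality reduces to the real form in
`a = ‖z₁‖, b = ‖z₂‖`. Finally, with `β = √λ α` one has `r = 4/β²` and `g r = β/2 · (β/2 + s)`.
-/

lemma half_add_sq_mul_sub_eq {β s : ℝ} (hs : s ^ 2 = 1 + β ^ 2 / 4) (a b : ℝ) :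
    (β / 2 + s) ^ 2 * (a ^ 2 + b ^ 2) - (a ^ 2 + (β * a + b) ^ 2)
      = β * (s - β / 2) * (a - (s + β / 2) * b) ^ 2 := by
  linear_combination (a ^ 2 + 2 * β * a * b + (1 - β * (s + β / 2)) * b ^ 2) * hs

lemma sq_add_mul_add_sq_le {β s : ℝ} (hβ : 0 ≤ β) (hs0 : 0 ≤ s) (hs : s ^ 2 = 1 + β ^ 2 / 4)
    (a b : ℝ) : a ^ 2 + (β * a + b) ^ 2 ≤ (β / 2 + s) ^ 2 * (a ^ 2 + b ^ 2) := by
  have hgap : 0 ≤ s - β / 2 := by nlinarith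
  have := half_add_sq_mul_sub_eq hs a b
  nlinarith [mul_nonneg (mul_nonneg hβ hgap) (sq_nonneg (a - (s + β / 2) * b))]

lemma norm_sq_add_norm_ofReal_mul_add_sq_le {β s : ℝ} (hβ : 0 ≤ β) (hs0 : 0 ≤ s)
    (hs : s ^ 2 = 1 + β ^ 2 / 4) (z₁ z₂ : ℂ) :
    ‖z₁‖ ^ 2 + ‖(β : ℂ) * z₁ + z₂‖ ^ 2 ≤ (β / 2 + s) ^ 2 * (‖z₁‖ ^ 2 + ‖z₂‖ ^ 2) := by
  have htri : ‖(β : ℂ) * z₁ + z₂‖ ≤ β * ‖z₁‖ + ‖z₂‖ := by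
    simpa [Complex.norm_real, abs_of_nonneg hβ] using norm_add_le ((β : ℂ) * z₁) z₂
  calc ‖z₁‖ ^ 2 + ‖(β : ℂ) * z₁ + z₂‖ ^ 2 ≤ ‖z₁‖ ^ 2 + (β * ‖z₁‖ + ‖z₂‖) ^ 2 := by gcongr
    _ ≤ _ := sq_add_mul_add_sq_le hβ hs0 hs _ _

lemma exists_norm_sq_add_norm_ofReal_mul_add_sq_eq {β s : ℝ} (hs : s ^ 2 = 1 + β ^ 2 / 4) :
    ∃ z₁ z₂ : ℂ, ‖z₁‖ ^ 2 + ‖z₂‖ ^ 2 = 1 ∧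
      ‖z₁‖ ^ 2 + ‖(β : ℂ) * z₁ + z₂‖ ^ 2 = (β / 2 + s) ^ 2 := by
  set c := s + β / 2
  set n := √(1 + c ^ 2)
  have hn : 0 < n := Real.sqrt_pos.mpr (by positivity)
  have hunit : (c / n) ^ 2 + (1 / n) ^ 2 = 1 := by
    rw [div_pow, div_pow, Real.sq_sqrt (by positivity)]
    field_simp
    ring
  refine ⟨((c / n : ℝ) : ℂ), ((1 / n : ℝ) : ℂ), ?_, ?_⟩
  · simpa only [Complex.norm_real, Real.norm_eq_abs, sq_abs] using hunit
  · have hgap := half_add_sq_mul_sub_eq hs (c / n) (1 / n)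
    rw [show c / n - c * (1 / n) = 0 by ring, hunit, zero_pow two_ne_zero, mul_zero,
      mul_one, sub_eq_zero] at hgap
    rw [← Complex.ofReal_mul, ← Complex.ofReal_add]
    simpa only [Complex.norm_real, Real.norm_eq_abs, sq_abs] using hgap.symm

lemma isGreatest_norm_sq_add_norm_ofReal_mul_add_sq {β : ℝ} (hβ : 0 ≤ β) :
    IsGreatest {x : ℝ | ∃ z₁ z₂ : ℂ, ‖z₁‖ ^ 2 + ‖z₂‖ ^ 2 = 1 ∧
        x = ‖z₁‖ ^ 2 + ‖(β : ℂ) * z₁ + z₂‖ ^ 2}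
      ((β / 2 + √(1 + β ^ 2 / 4)) ^ 2) := by
  have hs : √(1 + β ^ 2 / 4) ^ 2 = 1 + β ^ 2 / 4 := Real.sq_sqrt (by positivity)
  refine ⟨?_, ?_⟩
  · obtain ⟨z₁, z₂, hunit, heq⟩ := exists_norm_sq_add_norm_ofReal_mul_add_sq_eq hs
    exact ⟨z₁, z₂, hunit, heq.symm⟩
  · rintro x ⟨z₁, z₂, hunit, rfl⟩
    simpa [hunit] using
      norm_sq_add_norm_ofReal_mul_add_sq_le hβ (Real.sqrt_nonneg _) hs z₁ z₂

lemma one_add_sqrt_one_add_four_div_sq_div {β : ℝ} (hβ : 0 < β) :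
    (1 + √(1 + 4 / β ^ 2)) / (4 / β ^ 2) = β / 2 * (β / 2 + √(1 + β ^ 2 / 4)) := by
  have hsqrt : √(1 + 4 / β ^ 2) = 2 / β * √(1 + β ^ 2 / 4) := by
    rw [show 1 + 4 / β ^ 2 = (2 / β) ^ 2 * (1 + β ^ 2 / 4) by field_simp; ring,
      Real.sqrt_mul (sq_nonneg _), Real.sqrt_sq (by positivity)]
  rw [hsqrt]
  field_simp
  ring

theorem stmt_8 (α lam : ℝ) (hα : 0 < α) (hlam : 0 < lam) :
    let g : ℝ → ℝ := fun r => (1 + Real.sqrt (1 + r)) / r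
    let r := (2 / α) ^ 2 / lam
    IsGreatest {x : ℝ | ∃ z₁ z₂ : ℂ,
        ‖z₁‖ ^ 2 + ‖z₂‖ ^ 2 = 1 ∧
        x = lam * (‖z₁‖ ^ 2 +
          ‖(Real.sqrt lam * α : ℝ) * z₁ + z₂‖ ^ 2)}
      (lam * (Real.sqrt lam * α / 2 + Real.sqrt (1 + lam * α ^ 2 / 4)) ^ 2) ∧
    lam * (Real.sqrt lam * α / 2 + Real.sqrt (1 + lam * α ^ 2 / 4)) ^ 2
      = (2 / α) ^ 2 * (g r) ^ 2 := by
  intro g r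
  set β := √lam * α
  have hβ : 0 < β := mul_pos (Real.sqrt_pos.mpr hlam) hα
  have hβsq : β ^ 2 = lam * α ^ 2 := by rw [mul_pow, Real.sq_sqrt hlam.le]
  have hr : r = 4 / β ^ 2 := by
    rw [hβsq, show r = (2 / α) ^ 2 / lam from rfl]
    field_simp
    ring
  rw [← hβsq]
  obtain ⟨hmem, hub⟩ := isGreatest_norm_sq_add_norm_ofReal_mul_add_sq hβ.le
  refine ⟨⟨?_, ?_⟩, ?_⟩
  · obtain ⟨z₁, z₂, hunit, heq⟩ := hmem
    exact ⟨z₁, z₂, hunit, by rw [heq]⟩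
  · rintro x ⟨z₁, z₂, hunit, rfl⟩
    exact mul_le_mul_of_nonneg_left (hub ⟨z₁, z₂, hunit, rfl⟩) hlam.le
  · simp only [g, hr, one_add_sqrt_one_add_four_div_sq_div hβ]
    field_simp
    rw [hβsq]
end

section
/- Let α > 0, μ > 2/α, and λ > (2/α)² be such that ξ₋(λ) = (−αλ − √((αλ)²−4λ))/2 ≤ −μ. Then the other root ξ₊(λ) = (−αλ + √((αλ)²−4λ))/2 satisfies 0 > ξ₊(λ) ≥ −(2/α)·1/(2 − (2/α)/μ), and in particular |ξ₊(λ)| ≤ 2/α. -/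
theorem stmt_19 (α μ lam : ℝ) (hα : 0 < α) (hμ : 2 / α < μ) (hlam : (2 / α) ^ 2 < lam)
    (hξm : (-(α * lam) - Real.sqrt ((α * lam) ^ 2 - 4 * lam)) / 2 ≤ -μ) :
    let ξp := (-(α * lam) + Real.sqrt ((α * lam) ^ 2 - 4 * lam)) / 2
    ξp < 0 ∧ -(2 / α) * (1 / (2 - (2 / α) / μ)) ≤ ξp ∧ |ξp| ≤ 2 / α := by
  intro ξp
  set s := Real.sqrt ((α * lam) ^ 2 - 4 * lam) with hs_def
  set ξm := (-(α * lam) - s) / 2 with hξm_def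
  have hμ0 : 0 < μ := lt_trans (div_pos two_pos hα) hμ
  have hαμ : 2 < α * μ := by
    rw [div_lt_iff₀ hα] at hμ; linarith [hμ]
  have hlam0 : 0 < lam := lt_trans (by positivity) hlam
  have h4 : 4 < α ^ 2 * lam := by
    rw [div_pow, div_lt_iff₀ (by positivity)] at hlam
    nlinarith [hlam]
  have hD : 0 ≤ (α * lam) ^ 2 - 4 * lam := by nlinarith [h4, hlam0]
  have hs0 : 0 ≤ s := Real.sqrt_nonneg _
  have hs2 : s ^ 2 = (α * lam) ^ 2 - 4 * lam := Real.sq_sqrt hD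
  have hslt : s < α * lam := by nlinarith [hs2, hlam0, hs0, mul_pos hα hlam0]
  have hξp_neg : ξp < 0 := by
    show (-(α * lam) + s) / 2 < 0
    linarith
  have hξm_neg : ξm < 0 := lt_of_le_of_lt hξm (by linarith)
  have key1 : ξp * ξm = lam := by
    show (-(α * lam) + s) / 2 * ((-(α * lam) - s) / 2) = lam
    linear_combination (-(1:ℝ)/4) * hs2
  have key2 : ξp + ξm = -(α * lam) := by
    show (-(α * lam) + s) / 2 + (-(α * lam) - s) / 2 = -(α * lam)
    ring
  have h5 : ξm * (α * ξp + 1) = -ξp := by linear_combination α * key1 + key2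
  have hA : α * ξp + 1 < 0 := by
    by_contra h
    push_neg at h
    nlinarith [mul_nonneg h (le_of_lt (neg_pos.mpr hξm_neg)), h5, hξp_neg]
  have hden : (0:ℝ) < α * μ - 1 := by linarith
  have hmain : -μ ≤ ξp * (α * μ - 1) := by
    nlinarith [mul_nonneg (by linarith [hξm] : (0:ℝ) ≤ -(ξm + μ))
      (by linarith : (0:ℝ) ≤ -(α * ξp + 1)), key1, key2]
  have hB : -μ / (α * μ - 1) ≤ ξp := (div_le_iff₀ hden).mpr hmain
  have heq : -(2 / α) * (1 / (2 - (2 / α) / μ)) = -μ / (α * μ - 1) := by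
    have h1 : α ≠ 0 := ne_of_gt hα
    have h2 : μ ≠ 0 := ne_of_gt hμ0
    have h3 : α * μ - 1 ≠ 0 := ne_of_gt hden
    have hd2 : (0:ℝ) < 2 - 2 / α / μ := by
      rw [div_div, sub_pos, div_lt_iff₀ (by positivity)]
      nlinarith [hαμ]
    have h4' : (2 : ℝ) - 2 / α / μ ≠ 0 := ne_of_gt hd2
    have h5' : -(α * 2) + α ^ 2 * μ * 2 ≠ 0 := by nlinarith [hαμ, hα]
    field_simp
  have hbound2 : -(2 / α) * (1 / (2 - (2 / α) / μ)) ≤ ξp := heq ▸ hB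
  refine ⟨hξp_neg, hbound2, ?_⟩
  rw [abs_le]
  constructor
  · have h6 : μ / (α * μ - 1) ≤ 2 / α := by
      rw [div_le_div_iff₀ hden hα]
      nlinarith [hαμ, hμ0]
    have : -(2 / α) ≤ -μ / (α * μ - 1) := by
      rw [neg_div]; linarith
    linarith [hB]
  · linarith [hξp_neg, div_pos two_pos hα]
end
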